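/- arXiv:1910.09518 — 6 statements merged into one kernel-verified Lean document; each statement's English description precedes it below -/
import Mathlib

section
/- Let 𝐮, 𝐯 ∈ ℝ³ with u = |𝐮|, v = |𝐯|, and let 𝐁 ∈ ℝ³ be arbitrary (representing the vector-valued 1-form u·d𝐯 − v·d𝐮 evaluated on a tangent vector). Define 𝐀₊ = v𝐮 − u𝐯, 𝐀₋ = v𝐮 + u𝐯, a₊ = uv − 𝐮·𝐯, a₋ = uv + 𝐮·𝐯. Then 2uv·[a₊a₋·|𝐁|² − (det(𝐁,𝐮,𝐯))²] = a₋·(𝐀₊·𝐁)² + a₊·(𝐀₋·𝐁)², where det(𝐁,𝐮,𝐯) = 𝐁·(𝐮×𝐯) is the scalar triple product. -/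
open Matrix

theorem key_metric_identity (U V B : Fin 3 → ℝ) :
    let u := Real.sqrt (U ⬝ᵥ U)
    let v := Real.sqrt (V ⬝ᵥ V)
    let Aplus := v • U - u • V
    let Aminus := v • U + u • V
    let aplus := u * v - U ⬝ᵥ V
    let aminus := u * v + U ⬝ᵥ V
    2 * u * v * (aplus * aminus * (B ⬝ᵥ B) - (B ⬝ᵥ (U ⨯₃ V))^2)
      = aminus * (Aplus ⬝ᵥ B)^2 + aplus * (Aminus ⬝ᵥ B)^2 := by
  intro u v Aplus Aminus aplus aminus
  have hUnn : (0:ℝ) ≤ U ⬝ᵥ U := Finset.sum_nonneg fun i _ => mul_self_nonneg (U i)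
  have hVnn : (0:ℝ) ≤ V ⬝ᵥ V := Finset.sum_nonneg fun i _ => mul_self_nonneg (V i)
  have hu2 : u ^ 2 = U ⬝ᵥ U := Real.sq_sqrt hUnn
  have hv2 : v ^ 2 = V ⬝ᵥ V := Real.sq_sqrt hVnn
  have central : (U ⬝ᵥ U) * (V ⬝ᵥ V) * (B ⬝ᵥ B) - (U ⬝ᵥ V)^2 * (B ⬝ᵥ B)
        - (B ⬝ᵥ (U ⨯₃ V))^2
      = (V ⬝ᵥ V) * (U ⬝ᵥ B)^2 + (U ⬝ᵥ U) * (V ⬝ᵥ B)^2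
        - 2 * (U ⬝ᵥ V) * (U ⬝ᵥ B) * (V ⬝ᵥ B) := by
    simp [dotProduct, crossProduct, Fin.sum_univ_three]
    ring
  have hAp : Aplus ⬝ᵥ B = v * (U ⬝ᵥ B) - u * (V ⬝ᵥ B) := by
    simp [Aplus, sub_dotProduct, smul_dotProduct, smul_eq_mul]
  have hAm : Aminus ⬝ᵥ B = v * (U ⬝ᵥ B) + u * (V ⬝ᵥ B) := by
    simp [Aminus, add_dotProduct, smul_dotProduct, smul_eq_mul]
  rw [hAp, hAm]
  show 2 * u * v * (aplus * aminus * (B ⬝ᵥ B) - (B ⬝ᵥ (U ⨯₃ V))^2) = _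
  have hap : aplus = u * v - U ⬝ᵥ V := rfl
  have ham : aminus = u * v + U ⬝ᵥ V := rfl
  rw [hap, ham]
  linear_combination (2*u*v) * central
    + (2*u*v*((B ⬝ᵥ B) * v^2 - (V ⬝ᵥ B)^2)) * hu2
    + (2*u*v*((B ⬝ᵥ B) * (U ⬝ᵥ U) - (U ⬝ᵥ B)^2)) * hv2
end

section
/- Let 𝐮, 𝐯 : ℝ → ℝ³ be smooth curves with u = |𝐮|, v = |𝐯| nonvanishing, and set R = u+v, p_i = u_i+v_i, q_i = R(u_i−v_i). Then (1/2)Σᵢ₌₁³ qᵢ p'ᵢ − R·(−u u' + v v' + (1/2)(−u v' + v u' + 𝐮·𝐯' − 𝐯·𝐮')) = d/dt[(1/2)R²(u−v)]. -/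
open Matrix

set_option maxHeartbeats 2000000 in
/-- Darboux coordinates: the 1-form `(1/2) Σ qᵢ dpᵢ − R·(X⌟τ₀)` is exact, equal to
`d((1/2) R² (u−v))`, along any smooth curve with `u, v` nonvanishing. -/
theorem darboux_exactness (U V : ℝ → Fin 3 → ℝ)
    (hU : ContDiff ℝ (⊤ : ℕ∞) U) (hV : ContDiff ℝ (⊤ : ℕ∞) V)
    (hUne : ∀ t, U t ≠ 0) (hVne : ∀ t, V t ≠ 0) :
    ∀ t : ℝ,
      let u : ℝ → ℝ := fun s => Real.sqrt (U s ⬝ᵥ U s)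
      let v : ℝ → ℝ := fun s => Real.sqrt (V s ⬝ᵥ V s)
      let R : ℝ → ℝ := fun s => u s + v s
      let p : ℝ → Fin 3 → ℝ := fun s i => U s i + V s i
      let q : ℝ → Fin 3 → ℝ := fun s i => R s * (U s i - V s i)
      (1/2) * (∑ i : Fin 3, q t i * deriv (fun s => p s i) t)
        - R t * (-(u t) * deriv u t + v t * deriv v t
            + (1/2) * (-(u t) * deriv v t + v t * deriv u t
                + (U t ⬝ᵥ fun i => deriv (fun s => V s i) t)
                - (V t ⬝ᵥ fun i => deriv (fun s => U s i) t)))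
      = deriv (fun s => (1/2) * (R s)^2 * (u s - v s)) t := by
  intro t
  dsimp only
  have hUdiff : ∀ i, Differentiable ℝ fun s => U s i := fun i =>
    (differentiable_pi.mp (hU.differentiable (by simp))) i
  have hVdiff : ∀ i, Differentiable ℝ fun s => V s i := fun i =>
    (differentiable_pi.mp (hV.differentiable (by simp))) i
  have hUd : ∀ i : Fin 3, HasDerivAt (fun s => U s i) (deriv (fun s => U s i) t) t :=
    fun i => ((hUdiff i) t).hasDerivAt
  have hVd : ∀ i : Fin 3, HasDerivAt (fun s => V s i) (deriv (fun s => V s i) t) t :=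
    fun i => ((hVdiff i) t).hasDerivAt
  have hUU : (0 : ℝ) < U t ⬝ᵥ U t := by
    have h1 : (0 : ℝ) ≤ U t ⬝ᵥ U t := by
      simp only [dotProduct]
      exact Finset.sum_nonneg fun j _ => mul_self_nonneg _
    exact lt_of_le_of_ne h1 fun h => hUne t (dotProduct_self_eq_zero.mp h.symm)
  have hVV : (0 : ℝ) < V t ⬝ᵥ V t := by
    have h1 : (0 : ℝ) ≤ V t ⬝ᵥ V t := by
      simp only [dotProduct]
      exact Finset.sum_nonneg fun j _ => mul_self_nonneg _
    exact lt_of_le_of_ne h1 fun h => hVne t (dotProduct_self_eq_zero.mp h.symm)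
  have hdotU : HasDerivAt (fun s => U s ⬝ᵥ U s)
      (∑ j : Fin 3, (deriv (fun s => U s j) t * U t j + U t j * deriv (fun s => U s j) t)) t := by
    simp only [dotProduct]
    exact HasDerivAt.fun_sum fun j _ => (hUd j).mul (hUd j)
  have hdotV : HasDerivAt (fun s => V s ⬝ᵥ V s)
      (∑ j : Fin 3, (deriv (fun s => V s j) t * V t j + V t j * deriv (fun s => V s j) t)) t := by
    simp only [dotProduct]
    exact HasDerivAt.fun_sum fun j _ => (hVd j).mul (hVd j)
  have hu : HasDerivAt (fun s => Real.sqrt (U s ⬝ᵥ U s))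
      ((∑ j : Fin 3, (deriv (fun s => U s j) t * U t j + U t j * deriv (fun s => U s j) t))
        / (2 * Real.sqrt (U t ⬝ᵥ U t))) t := hdotU.sqrt (ne_of_gt hUU)
  have hv : HasDerivAt (fun s => Real.sqrt (V s ⬝ᵥ V s))
      ((∑ j : Fin 3, (deriv (fun s => V s j) t * V t j + V t j * deriv (fun s => V s j) t))
        / (2 * Real.sqrt (V t ⬝ᵥ V t))) t := hdotV.sqrt (ne_of_gt hVV)
  have hp : ∀ i : Fin 3, deriv (fun s => U s i + V s i) t
      = deriv (fun s => U s i) t + deriv (fun s => V s i) t :=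
    fun i => ((hUd i).add (hVd i)).deriv
  have hrhs : deriv (fun s =>
      (1/2) * (Real.sqrt (U s ⬝ᵥ U s) + Real.sqrt (V s ⬝ᵥ V s))^2
        * (Real.sqrt (U s ⬝ᵥ U s) - Real.sqrt (V s ⬝ᵥ V s))) t
      = (1/2) * ((2 : ℕ) * (Real.sqrt (U t ⬝ᵥ U t) + Real.sqrt (V t ⬝ᵥ V t)) ^ 1
          * ((∑ j : Fin 3, (deriv (fun s => U s j) t * U t j + U t j * deriv (fun s => U s j) t))
              / (2 * Real.sqrt (U t ⬝ᵥ U t))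
            + (∑ j : Fin 3, (deriv (fun s => V s j) t * V t j + V t j * deriv (fun s => V s j) t))
              / (2 * Real.sqrt (V t ⬝ᵥ V t))))
          * (Real.sqrt (U t ⬝ᵥ U t) - Real.sqrt (V t ⬝ᵥ V t))
        + (1/2) * (Real.sqrt (U t ⬝ᵥ U t) + Real.sqrt (V t ⬝ᵥ V t))^2
          * ((∑ j : Fin 3, (deriv (fun s => U s j) t * U t j + U t j * deriv (fun s => U s j) t))
              / (2 * Real.sqrt (U t ⬝ᵥ U t))
            - (∑ j : Fin 3, (deriv (fun s => V s j) t * V t j + V t j * deriv (fun s => V s j) t))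
              / (2 * Real.sqrt (V t ⬝ᵥ V t))) := by
    exact ((((hu.add hv).pow 2).const_mul (1/2)).mul (hu.sub hv)).deriv
  rw [hrhs, hu.deriv, hv.deriv]
  simp only [hp]
  have ha : Real.sqrt (U t ⬝ᵥ U t) ≠ 0 := ne_of_gt (Real.sqrt_pos.mpr hUU)
  have hb : Real.sqrt (V t ⬝ᵥ V t) ≠ 0 := ne_of_gt (Real.sqrt_pos.mpr hVV)
  have hsum : (∑ i : Fin 3, (Real.sqrt (U t ⬝ᵥ U t) + Real.sqrt (V t ⬝ᵥ V t)) * (U t i - V t i)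
        * (deriv (fun s => U s i) t + deriv (fun s => V s i) t))
      = (Real.sqrt (U t ⬝ᵥ U t) + Real.sqrt (V t ⬝ᵥ V t))
        * ((∑ j : Fin 3, (deriv (fun s => U s j) t * U t j + U t j * deriv (fun s => U s j) t)) / 2
          - (∑ j : Fin 3, (deriv (fun s => V s j) t * V t j + V t j * deriv (fun s => V s j) t)) / 2
          + (U t ⬝ᵥ fun i => deriv (fun s => V s i) t)
          - (V t ⬝ᵥ fun i => deriv (fun s => U s i) t)) := by
    simp only [dotProduct, Fin.sum_univ_three]
    ring
  rw [hsum]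
  set a := Real.sqrt (U t ⬝ᵥ U t) with ha'
  set b := Real.sqrt (V t ⬝ᵥ V t) with hb'
  set SU := ∑ j : Fin 3, (deriv (fun s => U s j) t * U t j + U t j * deriv (fun s => U s j) t)
    with hSU
  set SV := ∑ j : Fin 3, (deriv (fun s => V s j) t * V t j + V t j * deriv (fun s => V s j) t)
    with hSV
  set C := U t ⬝ᵥ fun i => deriv (fun s => V s i) t with hC
  set D := V t ⬝ᵥ fun i => deriv (fun s => U s i) t with hD
  field_simp
  ring
end

section
/- Let 𝐦 ∈ ℝ³ be a fixed nonzero vector, and for (𝐮, 𝐯) ∈ ℝ³ × ℝ³ write u = |𝐮|, v = |𝐯|, 𝐩 = 𝐮+𝐯, 𝐪 = (u+v)(𝐮−𝐯). Then the pullback of the 2-form σ = −(1/2)Σᵢ dpᵢ ∧ dqᵢ to the level set {𝐮·√(u+v) = 𝐦} is zero, i.e. this level set is Lagrangian. -/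
open Matrix

private lemma lagr_aux (U V a b c d : Fin 3 → ℝ) (u v R α γ : ℝ)
    (hu : 0 < u) (hv : 0 < v) (hR : 0 < R)
    (hu2 : u * u = U ⬝ᵥ U)
    (hα : α = (U ⬝ᵥ a) / u + (V ⬝ᵥ b) / v)
    (hγ : γ = (U ⬝ᵥ c) / u + (V ⬝ᵥ d) / v)
    (ha : ∀ i, a i = -(U i * α) / (2 * R))
    (hc : ∀ i, c i = -(U i * γ) / (2 * R)) :
    -(1/2) * ∑ i : Fin 3, ((a i + b i) * (γ * (U i - V i) + R * (c i - d i))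
      - (c i + d i) * (α * (U i - V i) + R * (a i - b i))) = 0 := by
  have hRne : R ≠ 0 := ne_of_gt hR
  have hune : u ≠ 0 := ne_of_gt hu
  have hvne : v ≠ 0 := ne_of_gt hv
  obtain ⟨B, hB⟩ : ∃ x, V ⬝ᵥ b = x := ⟨_, rfl⟩
  obtain ⟨D, hD⟩ : ∃ x, V ⬝ᵥ d = x := ⟨_, rfl⟩
  -- the symplectic sum reduces to α (V⬝d) − γ (V⬝b)
  have hsum : ∑ i : Fin 3, ((a i + b i) * (γ * (U i - V i) + R * (c i - d i))
      - (c i + d i) * (α * (U i - V i) + R * (a i - b i)))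
      = α * (V ⬝ᵥ d) - γ * (V ⬝ᵥ b) := by
    simp only [dotProduct, Fin.sum_univ_three, ha 0, ha 1, ha 2, hc 0, hc 1, hc 2]
    field_simp
    ring
  have hUa : U ⬝ᵥ a = -(α * (u * u)) / (2 * R) := by
    have h2 : U ⬝ᵥ a = -((U ⬝ᵥ U) * α) / (2 * R) := by
      simp only [dotProduct, Fin.sum_univ_three, ha 0, ha 1, ha 2]
      ring
    rw [h2, ← hu2]; ring
  have hUc : U ⬝ᵥ c = -(γ * (u * u)) / (2 * R) := by
    have h2 : U ⬝ᵥ c = -((U ⬝ᵥ U) * γ) / (2 * R) := by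
      simp only [dotProduct, Fin.sum_univ_three, hc 0, hc 1, hc 2]
      ring
    rw [h2, ← hu2]; ring
  have hrel1 : α * (v * (2 * R + u)) = 2 * R * B := by
    rw [hUa, hB] at hα
    apply mul_left_cancel₀ hune
    field_simp at hα
    linear_combination u * hα
  have hrel2 : γ * (v * (2 * R + u)) = 2 * R * D := by
    rw [hUc, hD] at hγ
    apply mul_left_cancel₀ hune
    field_simp at hγ
    linear_combination u * hγ
  have key : α * (V ⬝ᵥ d) - γ * (V ⬝ᵥ b) = 0 := by
    rw [hB, hD]
    have h2R : (2 : ℝ) * R ≠ 0 := by positivity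
    have h : 2 * R * (α * D - γ * B) = 0 := by
      linear_combination γ * hrel1 - α * hrel2
    exact (mul_eq_zero.mp h).resolve_left h2R
  rw [hsum, key, mul_zero]

/-- The fibres of `(𝐮,𝐯) ↦ 𝐮·√(u+v)` are Lagrangian for
`σ = −(1/2) Σ dpᵢ ∧ dqᵢ`, with `𝐩 = 𝐮+𝐯`, `𝐪 = (u+v)(𝐮−𝐯)`:
for any two tangent vectors to the level set, `σ` vanishes. -/
theorem level_set_u_sqrtR_lagrangian (U V : Fin 3 → ℝ)
    (hU : U ≠ 0) (hV : V ≠ 0)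
    (a b c d : Fin 3 → ℝ) :
    let u := Real.sqrt (U ⬝ᵥ U)
    let v := Real.sqrt (V ⬝ᵥ V)
    let R := u + v
    -- differential of R evaluated on a tangent vector (x, y):
    let dR : (Fin 3 → ℝ) → (Fin 3 → ℝ) → ℝ :=
      fun x y => (U ⬝ᵥ x) / u + (V ⬝ᵥ y) / v
    -- differentials of pᵢ and qᵢ:
    let dp : (Fin 3 → ℝ) → (Fin 3 → ℝ) → Fin 3 → ℝ := fun x y i => x i + y i
    let dq : (Fin 3 → ℝ) → (Fin 3 → ℝ) → Fin 3 → ℝ :=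
      fun x y i => dR x y * (U i - V i) + R * (x i - y i)
    -- (a,b) and (c,d) are tangent to the level set {𝐮·√R = 𝐦}:
    (∀ i, Real.sqrt R * a i + U i * (dR a b / (2 * Real.sqrt R)) = 0) →
    (∀ i, Real.sqrt R * c i + U i * (dR c d / (2 * Real.sqrt R)) = 0) →
    -(1/2) * ∑ i : Fin 3, (dp a b i * dq c d i - dp c d i * dq a b i) = 0 := by
  intro u v R dR dp dq H1 H2
  have hUUnn : 0 ≤ U ⬝ᵥ U := by
    simp only [dotProduct]
    exact Finset.sum_nonneg fun i _ => mul_self_nonneg _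
  have hVVnn : 0 ≤ V ⬝ᵥ V := by
    simp only [dotProduct]
    exact Finset.sum_nonneg fun i _ => mul_self_nonneg _
  have hUU : 0 < U ⬝ᵥ U :=
    lt_of_le_of_ne hUUnn (Ne.symm (fun h => hU (dotProduct_self_eq_zero.mp h)))
  have hVV : 0 < V ⬝ᵥ V :=
    lt_of_le_of_ne hVVnn (Ne.symm (fun h => hV (dotProduct_self_eq_zero.mp h)))
  have hu : 0 < u := Real.sqrt_pos.mpr hUU
  have hv : 0 < v := Real.sqrt_pos.mpr hVV
  have hR : 0 < R := add_pos hu hv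
  have hu2 : u * u = U ⬝ᵥ U := Real.mul_self_sqrt hUUnn
  have hsR : Real.sqrt R * Real.sqrt R = R := Real.mul_self_sqrt hR.le
  have hspos : 0 < Real.sqrt R := Real.sqrt_pos.mpr hR
  have hsne : Real.sqrt R ≠ 0 := ne_of_gt hspos
  have ha : ∀ i, a i = -(U i * dR a b) / (2 * R) := by
    intro i
    have h := H1 i
    have hRne : R ≠ 0 := ne_of_gt hR
    field_simp at h ⊢
    linear_combination h - 2 * a i * hsR
  have hc : ∀ i, c i = -(U i * dR c d) / (2 * R) := by
    intro i
    have h := H2 i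
    have hRne : R ≠ 0 := ne_of_gt hR
    field_simp at h ⊢
    linear_combination h - 2 * c i * hsR
  exact lagr_aux U V a b c d u v R (dR a b) (dR c d) hu hv hR hu2 rfl rfl ha hc
end

section
/- The 2-dimensional Riemannian metric ds² = (1 + v/(2u)) du² + du dv + (1 + u/(2v)) dv² on the quadrant {u>0, v>0} is flat; indeed under the substitution u = R cos²(φ/2), v = R sin²(φ/2) it becomes dR² + (1/2)R² dφ², the metric of a cone of half-angle π/4. -/
/-- Substituting `u = R cos²(φ/2)`, `v = R sin²(φ/2)` into the quadratic form
`(1 + v/(2u)) du² + du dv + (1 + u/(2v)) dv²` yields `dR² + (1/2) R² dφ²`,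
the flat metric of a cone of half-angle `π/4`. -/
theorem flat_quadrant_metric (R φ dR dφ : ℝ) (hR : 0 < R)
    (hcos : Real.cos (φ/2) ≠ 0) (hsin : Real.sin (φ/2) ≠ 0) :
    let u := R * Real.cos (φ/2)^2
    let v := R * Real.sin (φ/2)^2
    let du := Real.cos (φ/2)^2 * dR - R * Real.cos (φ/2) * Real.sin (φ/2) * dφ
    let dv := Real.sin (φ/2)^2 * dR + R * Real.cos (φ/2) * Real.sin (φ/2) * dφ
    (1 + v/(2*u)) * du^2 + du * dv + (1 + u/(2*v)) * dv^2
      = dR^2 + (1/2) * R^2 * dφ^2 := by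
  intro u v du dv
  have hpyth : Real.sin (φ/2)^2 + Real.cos (φ/2)^2 = 1 := Real.sin_sq_add_cos_sq _
  set c := Real.cos (φ/2)
  set s := Real.sin (φ/2)
  have hu : u ≠ 0 := mul_ne_zero hR.ne' (pow_ne_zero _ hcos)
  have hv : v ≠ 0 := mul_ne_zero hR.ne' (pow_ne_zero _ hsin)
  simp only [u, v, du, dv]
  have hcos' : Real.cos (φ/2) ≠ 0 := hcos
  have hsin' : Real.sin (φ/2) ≠ 0 := hsin
  field_simp
  linear_combination (s^2 + c^2 + 1) * (2*dR^2 + R^2*dφ^2) * hpyth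
end

section
/- The surface of revolution metric (1/2)[dθ² + (1/4)(3 − cos 2θ)(dφ²)] has Gaussian curvature K(θ) = 1 − 8/(3 − cos 2θ)², which takes values in the interval [−1, 1/2]. -/
open Real

lemma g_ge (θ : ℝ) : (2:ℝ) ≤ 3 - Real.cos (2*θ) := by
  have := Real.cos_le_one (2*θ); linarith

lemma g_le (θ : ℝ) : 3 - Real.cos (2*θ) ≤ 4 := by
  have := Real.neg_one_le_cos (2*θ); linarith

lemma g_pos (θ : ℝ) : (0:ℝ) < 3 - Real.cos (2*θ) := lt_of_lt_of_le (by norm_num) (g_ge θ)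

lemma sqrt_pos' (θ : ℝ) : 0 < Real.sqrt (3 - Real.cos (2*θ)) := Real.sqrt_pos.2 (g_pos θ)

lemma hasDerivG (θ : ℝ) : HasDerivAt (fun θ => 3 - Real.cos (2*θ)) (2 * Real.sin (2*θ)) θ := by
  have h : HasDerivAt (fun θ : ℝ => Real.cos (2*θ)) (-Real.sin (2*θ) * 2) θ :=
    (Real.hasDerivAt_cos (2*θ)).comp θ (by simpa using (hasDerivAt_id θ).const_mul 2)
  have := (hasDerivAt_const θ (3:ℝ)).sub h
  refine this.congr_deriv ?_; ring

lemma hasDerivF (θ : ℝ) :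
    HasDerivAt (fun θ => (1/2) * Real.sqrt (3 - Real.cos (2*θ)))
      (Real.sin (2*θ) / (2 * Real.sqrt (3 - Real.cos (2*θ)))) θ := by
  have hs : HasDerivAt Real.sqrt (1 / (2 * Real.sqrt (3 - Real.cos (2*θ)))) (3 - Real.cos (2*θ)) :=
    Real.hasDerivAt_sqrt (ne_of_gt (g_pos θ))
  have h := ((hs.comp θ (hasDerivG θ)).const_mul (1/2 : ℝ))
  refine h.congr_deriv ?_
  have := (sqrt_pos' θ).ne'
  field_simp

lemma derivF : deriv (fun θ => (1/2) * Real.sqrt (3 - Real.cos (2*θ)))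
    = fun θ => Real.sin (2*θ) / (2 * Real.sqrt (3 - Real.cos (2*θ))) := by
  funext θ; exact (hasDerivF θ).deriv

lemma hasDerivF' (θ : ℝ) :
    HasDerivAt (fun θ => Real.sin (2*θ) / (2 * Real.sqrt (3 - Real.cos (2*θ))))
      ((2 * Real.cos (2*θ) * (2 * Real.sqrt (3 - Real.cos (2*θ)))
        - Real.sin (2*θ) * (2 * (Real.sin (2*θ) / Real.sqrt (3 - Real.cos (2*θ)))))
        / (2 * Real.sqrt (3 - Real.cos (2*θ)))^2) θ := by
  have hnum : HasDerivAt (fun θ : ℝ => Real.sin (2*θ)) (2 * Real.cos (2*θ)) θ := by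
    have h : HasDerivAt (fun θ : ℝ => Real.sin (2*θ)) (Real.cos (2*θ) * 2) θ :=
      (Real.hasDerivAt_sin (2*θ)).comp θ (by simpa using (hasDerivAt_id θ).const_mul 2)
    convert h using 1; ring
  have hsq : HasDerivAt (fun θ => Real.sqrt (3 - Real.cos (2*θ)))
      (Real.sin (2*θ) / Real.sqrt (3 - Real.cos (2*θ))) θ := by
    have hs : HasDerivAt Real.sqrt (1 / (2 * Real.sqrt (3 - Real.cos (2*θ)))) (3 - Real.cos (2*θ)) :=
      Real.hasDerivAt_sqrt (ne_of_gt (g_pos θ))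
    have h := hs.comp θ (hasDerivG θ)
    refine h.congr_deriv ?_
    have := (sqrt_pos' θ).ne'
    field_simp
  have hden : HasDerivAt (fun θ => 2 * Real.sqrt (3 - Real.cos (2*θ)))
      (2 * (Real.sin (2*θ) / Real.sqrt (3 - Real.cos (2*θ)))) θ := hsq.const_mul 2
  exact hnum.div hden (by have := sqrt_pos' θ; positivity)

/-- The surface-of-revolution metric `dθ² + f(θ)² dφ²` with
`f(θ) = (1/2)√(3 − cos 2θ)` has Gaussian curvature
`K(θ) = −f''(θ)/f(θ) = 1 − 8/(3 − cos 2θ)²`, taking all values in `[−1, 1/2]`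
with both bounds attained. -/
theorem gaussian_curvature_surface_of_revolution :
    let f : ℝ → ℝ := fun θ => (1/2) * Real.sqrt (3 - Real.cos (2*θ))
    let K : ℝ → ℝ := fun θ => -(deriv (deriv f) θ) / f θ
    (∀ θ : ℝ, K θ = 1 - 8 / (3 - Real.cos (2*θ))^2) ∧
    (∀ θ : ℝ, -1 ≤ K θ ∧ K θ ≤ 1/2) ∧
    (∃ θ : ℝ, K θ = -1) ∧ (∃ θ : ℝ, K θ = 1/2) := by
  intro f K
  have hK : ∀ θ : ℝ, K θ = 1 - 8 / (3 - Real.cos (2*θ))^2 := by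
    intro θ
    have h2 : deriv (deriv f) θ
        = (2 * Real.cos (2*θ) * (2 * Real.sqrt (3 - Real.cos (2*θ)))
        - Real.sin (2*θ) * (2 * (Real.sin (2*θ) / Real.sqrt (3 - Real.cos (2*θ)))))
        / (2 * Real.sqrt (3 - Real.cos (2*θ)))^2 := by
      show deriv (deriv (fun θ => (1/2) * Real.sqrt (3 - Real.cos (2*θ)))) θ = _
      rw [derivF]
      exact (hasDerivF' θ).deriv
    show -(deriv (deriv f) θ) / ((1/2) * Real.sqrt (3 - Real.cos (2*θ))) = _
    rw [h2]
    have hs := (sqrt_pos' θ).ne'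
    have hss : Real.sqrt (3 - Real.cos (2*θ)) * Real.sqrt (3 - Real.cos (2*θ))
        = 3 - Real.cos (2*θ) := Real.mul_self_sqrt (g_pos θ).le
    have hsin : Real.sin (2*θ)^2 + Real.cos (2*θ)^2 = 1 := Real.sin_sq_add_cos_sq _
    have hg := (g_pos θ).ne'
    field_simp
    linear_combination ((3 - Real.cos (2*θ))^2) * hsin
      + (-2*Real.cos (2*θ)*(3 - Real.cos (2*θ))^2
         + (8 - (3 - Real.cos (2*θ))^2)
           * (Real.sqrt (3 - Real.cos (2*θ)) * Real.sqrt (3 - Real.cos (2*θ)) + (3 - Real.cos (2*θ)))) * hss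
  refine ⟨hK, ?_, ⟨0, ?_⟩, ⟨Real.pi/2, ?_⟩⟩
  · intro θ
    rw [hK θ]
    have h1 := g_ge θ
    have h2 := g_le θ
    have hgp : (0:ℝ) < (3 - Real.cos (2*θ))^2 := by positivity
    constructor
    · have : 8 / (3 - Real.cos (2*θ))^2 ≤ 2 := by
        rw [div_le_iff₀ hgp]; nlinarith
      linarith
    · have : (1:ℝ)/2 ≤ 8 / (3 - Real.cos (2*θ))^2 := by
        rw [le_div_iff₀ hgp]; nlinarith
      linarith
  · rw [hK 0]; norm_num
  · rw [hK (Real.pi/2)]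
    have h : (2:ℝ) * (Real.pi/2) = Real.pi := by ring
    rw [h, Real.cos_pi]; norm_num
end

section
/- Let 𝐮, 𝐯 : I → ℝ³ be smooth with u = |𝐮|, v = |𝐯| nonvanishing, and define Γ₊ = (1/(uv))·𝐀₊·𝐁 where 𝐀₊ = v𝐮 − u𝐯 and 𝐁 = u d𝐯 − v d𝐮. Then Γ₊ = −u dv − v du + 𝐮·d𝐯 + 𝐯·d𝐮 = −d(uv − 𝐮·𝐯), i.e. Γ₊ is exact, equal to −da₊. -/
open Matrix

lemma dot_self_pos (W : Fin 3 → ℝ) (h : W ≠ 0) : 0 < W ⬝ᵥ W := by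
  have h0 : (0:ℝ) ≤ W ⬝ᵥ W := Finset.sum_nonneg fun i _ => mul_self_nonneg _
  rcases h0.lt_or_eq with h' | h'
  · exact h'
  · exact absurd ((dotProduct_self_eq_zero).mp h'.symm) h

/-- Lemma 4.6 (first line): along any smooth curve with `u = |𝐮|`, `v = |𝐯|`
nonvanishing, `Γ₊ = (1/(uv)) 𝐀₊·𝐁 = −d(uv − 𝐮·𝐯)`, i.e. `Γ₊` is exact, `= −da₊`. -/
theorem gamma_plus_exact (U V : ℝ → Fin 3 → ℝ)
    (hU : ContDiff ℝ (⊤ : ℕ∞) U) (hV : ContDiff ℝ (⊤ : ℕ∞) V)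
    (hUne : ∀ t, U t ≠ 0) (hVne : ∀ t, V t ≠ 0) :
    ∀ t : ℝ,
      let u : ℝ → ℝ := fun s => Real.sqrt (U s ⬝ᵥ U s)
      let v : ℝ → ℝ := fun s => Real.sqrt (V s ⬝ᵥ V s)
      let U' : Fin 3 → ℝ := fun i => deriv (fun s => U s i) t
      let V' : Fin 3 → ℝ := fun i => deriv (fun s => V s i) t
      let B : Fin 3 → ℝ := u t • V' - v t • U'
      let Aplus : Fin 3 → ℝ := v t • U t - u t • V t
      (1 / (u t * v t)) * (Aplus ⬝ᵥ B)
        = -(deriv (fun s => u s * v s - U s ⬝ᵥ V s) t) := by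
  intro t u v U' V' B Aplus
  have hUi : ∀ i, HasDerivAt (fun s => U s i) (U' i) t := fun i =>
    (((contDiff_pi.mp hU i).differentiable (by simp)) t).hasDerivAt
  have hVi : ∀ i, HasDerivAt (fun s => V s i) (V' i) t := fun i =>
    (((contDiff_pi.mp hV i).differentiable (by simp)) t).hasDerivAt
  have hUU : HasDerivAt (fun s => U s ⬝ᵥ U s)
      (U' 0 * U t 0 + U t 0 * U' 0 + (U' 1 * U t 1 + U t 1 * U' 1)
        + (U' 2 * U t 2 + U t 2 * U' 2)) t := by
    simpa [dotProduct, Fin.sum_univ_three] using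
      ((((hUi 0).fun_mul (hUi 0)).fun_add ((hUi 1).fun_mul (hUi 1))).fun_add ((hUi 2).fun_mul (hUi 2)))
  have hVV : HasDerivAt (fun s => V s ⬝ᵥ V s)
      (V' 0 * V t 0 + V t 0 * V' 0 + (V' 1 * V t 1 + V t 1 * V' 1)
        + (V' 2 * V t 2 + V t 2 * V' 2)) t := by
    simpa [dotProduct, Fin.sum_univ_three] using
      ((((hVi 0).fun_mul (hVi 0)).fun_add ((hVi 1).fun_mul (hVi 1))).fun_add ((hVi 2).fun_mul (hVi 2)))
  have hUV : HasDerivAt (fun s => U s ⬝ᵥ V s)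
      (U' 0 * V t 0 + U t 0 * V' 0 + (U' 1 * V t 1 + U t 1 * V' 1)
        + (U' 2 * V t 2 + U t 2 * V' 2)) t := by
    simpa [dotProduct, Fin.sum_univ_three] using
      ((((hUi 0).fun_mul (hVi 0)).fun_add ((hUi 1).fun_mul (hVi 1))).fun_add ((hUi 2).fun_mul (hVi 2)))
  have hUpos : ∀ s, (0:ℝ) < U s ⬝ᵥ U s := fun s => dot_self_pos _ (hUne s)
  have hVpos : ∀ s, (0:ℝ) < V s ⬝ᵥ V s := fun s => dot_self_pos _ (hVne s)
  have hu : HasDerivAt u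
      ((U' 0 * U t 0 + U t 0 * U' 0 + (U' 1 * U t 1 + U t 1 * U' 1)
        + (U' 2 * U t 2 + U t 2 * U' 2)) / (2 * u t)) t :=
    hUU.sqrt (hUpos t).ne'
  have hv : HasDerivAt v
      ((V' 0 * V t 0 + V t 0 * V' 0 + (V' 1 * V t 1 + V t 1 * V' 1)
        + (V' 2 * V t 2 + V t 2 * V' 2)) / (2 * v t)) t :=
    hVV.sqrt (hVpos t).ne'
  have hut : 0 < u t := Real.sqrt_pos.mpr (hUpos t)
  have hvt : 0 < v t := Real.sqrt_pos.mpr (hVpos t)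
  have hderiv := ((hu.fun_mul hv).fun_sub hUV).deriv
  rw [hderiv]
  simp only [B, Aplus, dotProduct, Fin.sum_univ_three, Pi.sub_apply, Pi.smul_apply,
    smul_eq_mul]
  field_simp
  ring
end
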